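/- Suppose 1 ≤ n < m − 3 with m ≥ 4. Then VR(F_n^m ∪ F_{n+1}^m ∪ F_{n+2}^m, 2) is homotopy equivalent to VR(F_n^m ∪ F_{n+2}^m, 2). -/

import Mathlib

open Finset

/-- An abstract simplicial complex on a vertex type `V`: a collection of nonempty
finite subsets of `V` (the faces), closed under taking nonempty subsets. -/
structure AbsSC (V : Type) where
  faces : Set (Finset V)
  not_empty_mem : ∅ ∉ faces
  down_closed : ∀ s ∈ faces, ∀ t : Finset V, t ⊆ s → t ≠ ∅ → t ∈ faces

namespace AbsSC

variable {V W : Type}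

/-- The vertex set of a simplicial complex. -/
def vertices (K : AbsSC V) : Set V := {v | ({v} : Finset V) ∈ K.faces}

/-- The geometric realization of a simplicial complex: the space of convex weightings
supported on a face, topologized as a subspace of `V → ℝ`. -/
def space (K : AbsSC V) : Type :=
  {f : V → ℝ // (∀ v, 0 ≤ f v) ∧ ∃ s ∈ K.faces, (∀ v, f v ≠ 0 → v ∈ s) ∧ ∑ v ∈ s, f v = 1}

instance (K : AbsSC V) : TopologicalSpace K.space := by unfold space; infer_instance

/-- `L` is a subcomplex of `K`. -/
def IsSubcomplex (L K : AbsSC V) : Prop := L.faces ⊆ K.faces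

/-- Homotopy equivalence of simplicial complexes (of their geometric realizations). -/
def HEquiv (K : AbsSC V) (L : AbsSC W) : Prop :=
  Nonempty (ContinuousMap.HomotopyEquiv K.space L.space)

/-- The realization of `K` is homotopy equivalent to the topological space `X`. -/
def HEquivTop (K : AbsSC V) (X : Type) [TopologicalSpace X] : Prop :=
  Nonempty (ContinuousMap.HomotopyEquiv K.space X)

/-- The inclusion of realizations induced by a subcomplex inclusion. -/
def incl {L K : AbsSC V} (h : L.faces ⊆ K.faces) : C(L.space, K.space) where
  toFun f := ⟨f.1, f.2.1, by obtain ⟨s, hs, h1, h2⟩ := f.2.2; exact ⟨s, h hs, h1, h2⟩⟩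
  continuous_toFun := Continuous.subtype_mk continuous_subtype_val _

variable [DecidableEq V]

/-- The link of a vertex. -/
def link (K : AbsSC V) (v : V) : AbsSC V where
  faces := {σ | σ ≠ ∅ ∧ v ∉ σ ∧ σ ∪ {v} ∈ K.faces}
  not_empty_mem h := h.1 rfl
  down_closed := by
    rintro s ⟨hne, hv, hs⟩ t hts htne
    exact ⟨htne, fun hvt => hv (hts hvt),
      K.down_closed _ hs _ (Finset.union_subset_union hts (Finset.Subset.refl _)) (by simp [Finset.union_eq_empty])⟩

lemma link_subset (K : AbsSC V) (v : V) : (K.link v).faces ⊆ K.faces := by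
  rintro σ ⟨hne, hv, hσ⟩
  exact K.down_closed _ hσ _ Finset.subset_union_left hne

/-- The complex induced on the vertices other than `v`. -/
def delete (K : AbsSC V) (v : V) : AbsSC V where
  faces := {σ | σ ∈ K.faces ∧ v ∉ σ}
  not_empty_mem h := K.not_empty_mem h.1
  down_closed := by
    rintro s ⟨hs, hv⟩ t hts htne
    exact ⟨K.down_closed _ hs _ hts htne, fun h => hv (hts h)⟩

/-- The star of a vertex: `st_K(v) = {σ : σ ∪ {v} ∈ K}`. -/
def star (K : AbsSC V) (v : V) : AbsSC V where
  faces := {σ | σ ≠ ∅ ∧ σ ∪ {v} ∈ K.faces}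
  not_empty_mem h := h.1 rfl
  down_closed := by
    rintro s ⟨hne, hs⟩ t hts htne
    exact ⟨htne,
      K.down_closed _ hs _ (Finset.union_subset_union hts (Finset.Subset.refl _)) (by simp [Finset.union_eq_empty])⟩

/-- The star cluster of a subcomplex `L` in `K`: the union of stars of vertices of `L`. -/
def starCluster (K L : AbsSC V) : AbsSC V where
  faces := {σ | σ ≠ ∅ ∧ ∃ v, ({v} : Finset V) ∈ L.faces ∧ σ ∪ {v} ∈ K.faces}
  not_empty_mem h := h.1 rfl
  down_closed := by
    rintro s ⟨hne, v, hvL, hs⟩ t hts htne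
    exact ⟨htne, v, hvL,
      K.down_closed _ hs _ (Finset.union_subset_union hts (Finset.Subset.refl _)) (by simp [Finset.union_eq_empty])⟩

/-- The union of two simplicial complexes. -/
def union (K₁ K₂ : AbsSC V) : AbsSC V where
  faces := K₁.faces ∪ K₂.faces
  not_empty_mem h := by
    rcases h with h | h
    exacts [K₁.not_empty_mem h, K₂.not_empty_mem h]
  down_closed := by
    rintro s (hs | hs) t hts htne
    exacts [Or.inl (K₁.down_closed _ hs _ hts htne), Or.inr (K₂.down_closed _ hs _ hts htne)]

/-- The union of a family of simplicial complexes. -/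
def iUnionC {ι : Type} (F : ι → AbsSC V) : AbsSC V where
  faces := ⋃ i, (F i).faces
  not_empty_mem h := by
    obtain ⟨i, hi⟩ := Set.mem_iUnion.mp h
    exact (F i).not_empty_mem hi
  down_closed := by
    intro s hs t hts htne
    obtain ⟨i, hi⟩ := Set.mem_iUnion.mp hs
    exact Set.mem_iUnion.mpr ⟨i, (F i).down_closed _ hi _ hts htne⟩

/-- The `n`-skeleton of a complex: all faces with at most `n+1` vertices. -/
def skeleton (K : AbsSC V) (n : ℕ) : AbsSC V where
  faces := {σ | σ ∈ K.faces ∧ σ.card ≤ n + 1}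
  not_empty_mem h := K.not_empty_mem h.1
  down_closed := by
    rintro s ⟨hs, hcard⟩ t hts htne
    exact ⟨K.down_closed _ hs _ hts htne, le_trans (Finset.card_le_card hts) hcard⟩

/-- The simplicial complex generated by a single simplex `s` (all its nonempty subsets). -/
def simplexCx (s : Finset V) : AbsSC V where
  faces := {t | t ≠ ∅ ∧ t ⊆ s}
  not_empty_mem h := h.1 rfl
  down_closed := by
    rintro a ⟨hne, has⟩ t hta htne
    exact ⟨htne, hta.trans has⟩

/-- A maximal simplex (facet) of `K`. -/
def IsFacet (K : AbsSC V) (σ : Finset V) : Prop :=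
  σ ∈ K.faces ∧ ∀ τ ∈ K.faces, σ ⊆ τ → τ = σ

/-- `K` is a clique complex: any nonempty set of vertices which pairwise span edges is a face. -/
def IsCliqueCx (K : AbsSC V) : Prop :=
  ∀ σ : Finset V, σ ≠ ∅ → (∀ v ∈ σ, ({v} : Finset V) ∈ K.faces) →
    (∀ v ∈ σ, ∀ w ∈ σ, v ≠ w → ({v, w} : Finset V) ∈ K.faces) → σ ∈ K.faces

/-- `L` is a full subcomplex of `K`. -/
def IsFull (L K : AbsSC V) : Prop :=
  ∀ σ ∈ K.faces, (∀ v ∈ σ, ({v} : Finset V) ∈ L.faces) → σ ∈ L.faces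

end AbsSC

noncomputable section

/-- The `n`-dimensional sphere. -/
abbrev Sph (n : ℕ) : Type := Metric.sphere (0 : EuclideanSpace ℝ (Fin (n + 1))) 1

/-- A base point on the sphere. -/
def sphBase (n : ℕ) : Sph n :=
  ⟨EuclideanSpace.single 0 1, by simp⟩

/-- Relation gluing the base points of `c` copies of a pointed space to an auxiliary point. -/
inductive wedgeRel (c : ℕ) (X : Type) (x₀ : X) : Unit ⊕ Fin c × X → Unit ⊕ Fin c × X → Prop
  | glue (i : Fin c) : wedgeRel c X x₀ (Sum.inl ()) (Sum.inr (i, x₀))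

/-- The wedge sum of `c` copies of the pointed space `(X, x₀)`. -/
def Wedge (c : ℕ) (X : Type) [TopologicalSpace X] (x₀ : X) : Type := Quot (wedgeRel c X x₀)

instance (c : ℕ) (X : Type) [TopologicalSpace X] (x₀ : X) : TopologicalSpace (Wedge c X x₀) := by
  unfold Wedge; infer_instance

/-- The base point of the wedge. -/
def wedgePt (c : ℕ) (X : Type) [TopologicalSpace X] (x₀ : X) : Wedge c X x₀ :=
  Quot.mk _ (Sum.inl ())

/-- The wedge sum of `c` copies of the `n`-sphere. -/
abbrev WedgeSph (n c : ℕ) : Type := Wedge c (Sph n) (sphBase n)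

/-- The base point of a wedge of spheres. -/
def wedgeSphPt (n c : ℕ) : WedgeSph n c := wedgePt c _ _

/-- Relation gluing the two base points in a binary wedge. -/
inductive wedge2Rel (X Y : Type) (x₀ : X) (y₀ : Y) : X ⊕ Y → X ⊕ Y → Prop
  | glue : wedge2Rel X Y x₀ y₀ (Sum.inl x₀) (Sum.inr y₀)

/-- The wedge sum `X ∨ Y` of two pointed spaces. -/
def Wedge2 (X Y : Type) [TopologicalSpace X] [TopologicalSpace Y] (x₀ : X) (y₀ : Y) : Type :=
  Quot (wedge2Rel X Y x₀ y₀)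

instance (X Y : Type) [TopologicalSpace X] [TopologicalSpace Y] (x₀ : X) (y₀ : Y) :
    TopologicalSpace (Wedge2 X Y x₀ y₀) := by unfold Wedge2; infer_instance

/-- Relation collapsing the top and bottom of the cylinder `X × [0,1]` to two cone points. -/
inductive suspRel (X : Type) : X × unitInterval ⊕ Bool → X × unitInterval ⊕ Bool → Prop
  | zero (x : X) : suspRel X (Sum.inl (x, 0)) (Sum.inr false)
  | one (x : X) : suspRel X (Sum.inl (x, 1)) (Sum.inr true)

/-- The (unreduced) suspension `Σ X`. -/
def Susp (X : Type) [TopologicalSpace X] : Type := Quot (suspRel X)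

instance (X : Type) [TopologicalSpace X] : TopologicalSpace (Susp X) := by
  unfold Susp; infer_instance

/-- The north cone point of the suspension. -/
def suspNorth (X : Type) [TopologicalSpace X] : Susp X := Quot.mk _ (Sum.inr true)

end

/-- The Vietoris–Rips complex at scale `r` of a collection `F` of finite subsets of `ℕ`,
with respect to the symmetric difference metric `d(A,B) = |A Δ B|`. -/
def VRc (F : Set (Finset ℕ)) (r : ℕ) : AbsSC (Finset ℕ) where
  faces := {σ | σ.Nonempty ∧ (∀ A ∈ σ, A ∈ F) ∧
    ∀ A ∈ σ, ∀ B ∈ σ, (symmDiff A B).card ≤ r}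
  not_empty_mem h := by simpa using h.1
  down_closed := by
    rintro s ⟨hne, hF, hd⟩ t hts htne
    exact ⟨Finset.nonempty_iff_ne_empty.mpr htne, fun A hA => hF A (hts hA),
      fun A hA B hB => hd A (hts hA) B (hts hB)⟩

/-- `F_n^m`: all `n`-element subsets of `[m] = {1, …, m}`. -/
def Fnm (m n : ℕ) : Set (Finset ℕ) := {A | A ⊆ Finset.Icc 1 m ∧ A.card = n}

/-- `F_{≤ n}^m`: all subsets of `[m]` of cardinality at most `n`. -/
def Fle (m n : ℕ) : Set (Finset ℕ) := {A | A ⊆ Finset.Icc 1 m ∧ A.card ≤ n}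

/-- The simplex `N[C] = {A : C ⊆ A, |A \ C| = 1}` inside `[m]`. -/
def NSimp (m : ℕ) (C : Finset ℕ) : Finset (Finset ℕ) :=
  (Finset.Icc 1 m \ C).image (fun x => insert x C)

/-- The simplex `L[S]`: all subsets of `S` obtained by removing one element. -/
def LSimp (S : Finset ℕ) : Finset (Finset ℕ) := S.image (fun x => S.erase x)

/-- The total order `≺`: first compare cardinalities, then compare the increasing
enumerations lexicographically. -/
def precLT (A B : Finset ℕ) : Prop :=
  A.card < B.card ∨
    (A.card = B.card ∧ List.Lex (· < ·) (A.sort (· ≤ ·)) (B.sort (· ≤ ·)))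

/-- `A ⪯ B`. -/
def precLE (A B : Finset ℕ) : Prop := precLT A B ∨ A = B

/-- `F^m_{≺ A}`: all subsets of `[m]` strictly preceding `A`. -/
def FprecLT (m : ℕ) (A : Finset ℕ) : Set (Finset ℕ) :=
  {B | B ⊆ Finset.Icc 1 m ∧ precLT B A}

/-- `F^m_{⪯ A}`: all subsets of `[m]` preceding (or equal to) `A`. -/
def FprecLE (m : ℕ) (A : Finset ℕ) : Set (Finset ℕ) :=
  {B | B ⊆ Finset.Icc 1 m ∧ precLE B A}

/-- The `j`-th value (0-indexed) of an enumeration `i : Fin n → ℕ`. -/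
def ith {n : ℕ} (i : Fin n → ℕ) (j : ℕ) : ℕ := if h : j < n then i ⟨j, h⟩ else 0

/-- The `ℓ`-th entry (1-indexed) of the enumeration, as an integer, with `i_0 = -1`. -/
def ivZ {n : ℕ} (i : Fin n → ℕ) (ℓ : ℕ) : ℤ := if ℓ = 0 then -1 else (ith i (ℓ - 1) : ℤ)

/-- For `B = i_1 i_2 ⋯ i_n` (increasing), with `d_1 = i_1` and
`d_ℓ = i_ℓ - (i_{ℓ-1} + 1)`, `r_B = Σ_{k=2}^{n-2} C(k,2) + Σ_{ℓ=1}^{n-2} d_ℓ·C(n-ℓ,2)`. -/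
def rA (B : Finset ℕ) : ℕ :=
  (∑ k ∈ Finset.Icc 2 (B.card - 2), Nat.choose k 2) +
    ∑ ℓ ∈ Finset.Icc 1 (B.card - 2),
      ((B.sort (· ≤ ·)).getD (ℓ - 1) 0 -
        (if ℓ = 1 then 0 else (B.sort (· ≤ ·)).getD (ℓ - 2) 0 + 1)) * Nat.choose (B.card - ℓ) 2

/-- For `B = i_1 i_2 ⋯ i_n` (increasing), with `c_1 = i_1 - 1` and
`c_ℓ = i_ℓ - (i_{ℓ-1} + 1)`, `s_B = Σ_{k=2}^{n-2} C(k,2) + Σ_{ℓ=1}^{n-2} c_ℓ·C(n-ℓ,2)`. -/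
def sA (B : Finset ℕ) : ℕ :=
  (∑ k ∈ Finset.Icc 2 (B.card - 2), Nat.choose k 2) +
    ∑ ℓ ∈ Finset.Icc 1 (B.card - 2),
      ((B.sort (· ≤ ·)).getD (ℓ - 1) 0 -
        (if ℓ = 1 then 1 else (B.sort (· ≤ ·)).getD (ℓ - 2) 0 + 1)) * Nat.choose (B.card - ℓ) 2

/-- `t_n = Σ_{A ⊆ [m], |A| = n} r_A`. -/
def tN (m n : ℕ) : ℕ :=
  ∑ A ∈ (Finset.Icc 1 m).powerset.filter (fun A => A.card = n), rA A

/-- `o_{m,n} = Σ { s_A : A ∈ F^m_{n+2}, min A ≥ 2 }`. -/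
def omn (m n : ℕ) : ℕ :=
  ∑ A ∈ (Finset.Icc 1 m).powerset.filter (fun A => A.card = n + 2 ∧ ∀ x ∈ A, 2 ≤ x), sA A

/-!
Call `M = F_{n+1}^m` the middle layer. The middle-layer vertices of a face `σ` form a clique of
the Johnson graph, so they have a common `n`-subset or lie in a common `(n+2)`-subset of `[m]`.
Such a set `A` is within distance `2` of every vertex of `σ`, hence `σ ∪ {A}` is again a face,
and `A` lies outside `M`. This cone point removes `M` one vertex count at a time: on the faces
with at most `j + 1` middle vertices, lower every middle weight by the `(j+1)`-st largest one and
give the removed mass to the cone point of the middle support. The straight-line homotopy to this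
map is a deformation retraction onto the faces with at most `j` middle vertices; it is continuous
because the cone point can only change where the transferred mass vanishes.
-/

namespace Finset

variable {α : Type*} [DecidableEq α] {s t u : Finset α}

theorem card_symmDiff (s t : Finset α) : #(symmDiff s t) = #(s \ t) + #(t \ s) := by
  rw [symmDiff_def, sup_eq_union, card_union_of_disjoint disjoint_sdiff_sdiff]

theorem card_symmDiff_of_subset (h : s ⊆ t) : #(symmDiff s t) = #t - #s := by
  rw [card_symmDiff, sdiff_eq_empty_iff_subset.mpr h, card_empty, zero_add,
    card_sdiff_of_subset h]

theorem subset_of_card_symmDiff_le_two (h : #(symmDiff s t) ≤ 2) (hst : #s < #t) : s ⊆ t := by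
  have hs := card_inter_add_card_sdiff s t
  have ht := card_inter_add_card_sdiff t s
  rw [inter_comm] at ht
  rw [card_symmDiff] at h
  rw [← sdiff_eq_empty_iff_subset, ← card_eq_zero]
  omega

theorem card_symmDiff_le_of_subset (hs : s ⊆ u) (ht : t ⊆ u) :
    #(symmDiff s t) ≤ (#u - #t) + (#u - #s) := by
  rw [card_symmDiff, ← card_sdiff_of_subset ht, ← card_sdiff_of_subset hs]
  exact add_le_add (card_le_card (sdiff_subset_sdiff hs le_rfl))
    (card_le_card (sdiff_subset_sdiff ht le_rfl))

theorem card_symmDiff_le_of_superset (hs : u ⊆ s) (ht : u ⊆ t) :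
    #(symmDiff s t) ≤ (#s - #u) + (#t - #u) := by
  rw [card_symmDiff, ← card_sdiff_of_subset ht, ← card_sdiff_of_subset hs]
  exact add_le_add (card_le_card (sdiff_subset_sdiff le_rfl ht))
    (card_le_card (sdiff_subset_sdiff le_rfl hs))

theorem card_sdiff_le_one_of_card_symmDiff_le_two (hc : #s = #t) (h : #(symmDiff s t) ≤ 2) :
    #(s \ t) ≤ 1 := by
  rw [card_symmDiff, ← card_sdiff_comm hc] at h
  omega

theorem subset_insert_of_card_sdiff_le_one {x : α} (h : #(s \ t) ≤ 1) (hxs : x ∈ s) (hxt : x ∉ t) :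
    s ⊆ insert x t := by
  intro y hys
  by_cases hyt : y ∈ t
  · exact mem_insert_of_mem hyt
  · rw [card_le_one.mp h y (mem_sdiff.mpr ⟨hys, hyt⟩) x (mem_sdiff.mpr ⟨hxs, hxt⟩)]
    exact mem_insert_self x t

theorem card_union_of_card_sdiff_le_one {k : ℕ} (hs : #s = k + 1) (ht : #t = k + 1)
    (hst : s ≠ t) (h : #(s \ t) ≤ 1) : #(s ∩ t) = k ∧ #(s ∪ t) = k + 2 := by
  have hpos : 0 < #(s \ t) := card_pos.mpr <| sdiff_nonempty.mpr fun hsub =>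
    hst (eq_of_subset_of_card_le hsub (by omega))
  have := card_inter_add_card_sdiff s t
  have := card_union_add_card_inter s t
  omega

/-- Cliques of the Johnson graph are stars or tops. -/
theorem exists_common_subset_or_superset {S : Finset α} {k : ℕ} {P : Finset (Finset α)}
    (hP : P.Nonempty) (hPS : ∀ B ∈ P, B ⊆ S ∧ #B = k + 1)
    (hadj : ∀ B ∈ P, ∀ B' ∈ P, #(B \ B') ≤ 1) :
    (∃ C, #C = k ∧ ∀ B ∈ P, C ⊆ B) ∨ (∃ D ⊆ S, #D = k + 2 ∧ ∀ B ∈ P, B ⊆ D) := by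
  obtain ⟨B₁, hB₁⟩ := hP
  by_cases hsingle : ∀ B ∈ P, B = B₁
  · obtain ⟨x, hx⟩ : B₁.Nonempty := card_pos.mp (by rw [(hPS B₁ hB₁).2]; omega)
    refine Or.inl ⟨B₁.erase x, by rw [card_erase_of_mem hx, (hPS B₁ hB₁).2]; rfl, ?_⟩
    exact fun B hB => hsingle B hB ▸ erase_subset x B₁
  push Not at hsingle
  obtain ⟨B₂, hB₂, hne⟩ := hsingle
  obtain ⟨hinter, hunion⟩ := card_union_of_card_sdiff_le_one (hPS B₁ hB₁).2 (hPS B₂ hB₂).2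
    hne.symm (hadj B₁ hB₁ B₂ hB₂)
  by_cases hC : ∀ B ∈ P, B₁ ∩ B₂ ⊆ B
  · exact Or.inl ⟨B₁ ∩ B₂, hinter, hC⟩
  push Not at hC
  obtain ⟨B₃, hB₃, hnot⟩ := hC
  obtain ⟨c, hc, hc₃⟩ := not_subset.mp hnot
  have hrecover : ∀ B ∈ P, c ∉ B → B₁ ∪ B₂ = insert c B := fun B hB hcB =>
    eq_of_subset_of_card_le
      (union_subset (subset_insert_of_card_sdiff_le_one (hadj B₁ hB₁ B hB) (mem_inter.mp hc).1 hcB)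
        (subset_insert_of_card_sdiff_le_one (hadj B₂ hB₂ B hB) (mem_inter.mp hc).2 hcB))
      (by rw [card_insert_of_notMem hcB, hunion, (hPS B hB).2])
  refine Or.inr ⟨B₁ ∪ B₂, union_subset (hPS B₁ hB₁).1 (hPS B₂ hB₂).1, hunion, fun B hB => ?_⟩
  by_cases hcB : c ∈ B
  · rw [hrecover B₃ hB₃ hc₃]
    exact subset_insert_of_card_sdiff_le_one (hadj B hB B₃ hB₃) hcB hc₃
  · rw [hrecover B hB hcB]
    exact subset_insert c B

end Finset

open Filter Topology in
theorem continuous_ite_zero_of_eventually_iff {X : Type*} [TopologicalSpace X] {g : X → ℝ}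
    {p : X → Prop} [DecidablePred p] (hg : Continuous g) (hg0 : ∀ x, 0 ≤ g x)
    (hp : ∀ x, g x ≠ 0 → ∀ᶠ y in 𝓝 x, p y ↔ p x) :
    Continuous fun x => if p x then g x else 0 := by
  refine continuous_iff_continuousAt.mpr fun x => ?_
  by_cases hx : g x = 0
  · show Tendsto _ (𝓝 x) (𝓝 (if p x then g x else 0))
    rw [hx, ite_self]
    refine squeeze_zero (fun y => ?_) (fun y => ?_) (hx ▸ hg.tendsto x)
    · split_ifs
      exacts [hg0 y, le_rfl]
    · split_ifs
      exacts [le_rfl, hg0 y]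
  · have hcont : ContinuousAt (fun y => if p x then g y else 0) x := by
      split_ifs
      exacts [hg.continuousAt, continuousAt_const]
    refine hcont.congr ?_
    filter_upwards [hp x hx] with y hy
    simp only [hy]

namespace AbsSC

variable {V : Type}

theorem ext_faces : ∀ {K L : AbsSC V}, K.faces = L.faces → K = L
  | ⟨_, _, _⟩, ⟨_, _, _⟩, rfl => rfl

/-- The defining property of the points of `K.space`. -/
def IsPoint (K : AbsSC V) (g : V → ℝ) : Prop :=
  (∀ v, 0 ≤ g v) ∧ ∃ s ∈ K.faces, (∀ v, g v ≠ 0 → v ∈ s) ∧ ∑ v ∈ s, g v = 1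

theorem exists_face_support (K : AbsSC V) (f : K.space) :
    ∃ σ ∈ K.faces, (∀ v, f.1 v ≠ 0 ↔ v ∈ σ) ∧ ∑ v ∈ σ, f.1 v = 1 := by
  classical
  obtain ⟨-, s, hs, hsupp, hsum⟩ := f.2
  have hsum' : ∑ v ∈ s with f.1 v ≠ 0, f.1 v = 1 := by rwa [sum_filter_ne_zero]
  refine ⟨{v ∈ s | f.1 v ≠ 0}, K.down_closed s hs _ (filter_subset _ _) ?_, fun v => ?_, hsum'⟩
  · exact nonempty_iff_ne_empty.mp (nonempty_of_sum_ne_zero (by rw [hsum']; exact one_ne_zero))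
  · simpa using hsupp v

theorem sum_eq_one_of_support_subset {K : AbsSC V} (f : K.space) {τ : Finset V}
    (hτ : ∀ v, f.1 v ≠ 0 → v ∈ τ) : ∑ v ∈ τ, f.1 v = 1 := by
  obtain ⟨σ, -, hσ, hsum⟩ := K.exists_face_support f
  refine (sum_subset (fun v hv => hτ v ((hσ v).mpr hv)) fun v _ hv => ?_).symm.trans hsum
  exact not_not.mp fun h => hv ((hσ v).mp h)

theorem apply_le_one {K : AbsSC V} (f : K.space) (v : V) : f.1 v ≤ 1 := by
  obtain ⟨σ, -, hσ, hsum⟩ := K.exists_face_support f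
  by_cases h : f.1 v = 0
  · rw [h]; exact zero_le_one
  · exact (single_le_sum (fun w _ => f.2.1 w) ((hσ v).mp h)).trans hsum.le

noncomputable def supportIn (M : Finset V) (f : V → ℝ) : Finset V := {v ∈ M | f v ≠ 0}

/-- For `0 ≤ f ≤ 1`: the `j`-th largest value of `f` on `M` (`0` if there is none). -/
noncomputable def kthMax (M : Finset V) (j : ℕ) (f : V → ℝ) : ℝ :=
  (M.powersetCard j).fold max 0 fun T => T.fold min 1 f

noncomputable def transfer (M : Finset V) (j : ℕ) (f : V → ℝ) : ℝ :=
  ∑ v ∈ M, min (f v) (kthMax M j f)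

section

variable {M : Finset V} {j : ℕ} {f : V → ℝ}

theorem mem_supportIn {v : V} : v ∈ supportIn M f ↔ v ∈ M ∧ f v ≠ 0 := mem_filter

theorem kthMax_nonneg : 0 ≤ kthMax M j f :=
  (le_fold_max 0).mpr (Or.inl le_rfl)

theorem kthMax_eq_zero (h : #(supportIn M f) < j) : kthMax M j f = 0 := by
  refine le_antisymm ((fold_max_le 0).mpr ⟨le_rfl, fun T hT => ?_⟩) kthMax_nonneg
  obtain ⟨hTM, hTcard⟩ := mem_powersetCard.mp hT
  obtain ⟨v, hvT, hv⟩ : ∃ v ∈ T, v ∉ supportIn M f := by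
    by_contra! hsub
    have := card_le_card hsub
    omega
  have hfv : f v = 0 := not_not.mp fun h => hv (mem_supportIn.mpr ⟨hTM hvT, h⟩)
  exact (fold_min_le 0).mpr (Or.inr ⟨v, hvT, hfv.le⟩)

theorem kthMax_pos (hf : ∀ v, 0 ≤ f v) (h : #(supportIn M f) = j) :
    0 < kthMax M j f := by
  have hmem : supportIn M f ∈ M.powersetCard j := mem_powersetCard.mpr ⟨filter_subset _ _, h⟩
  have hinner : 0 < (supportIn M f).fold min 1 f :=
    (lt_fold_min 0).mpr ⟨one_pos, fun v hv => (hf v).lt_of_ne (mem_supportIn.mp hv).2.symm⟩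
  exact hinner.trans_le ((le_fold_max _).mpr (Or.inr ⟨_, hmem, le_rfl⟩))

theorem le_card_supportIn (h : 0 < kthMax M j f) : j ≤ #(supportIn M f) := by
  obtain ⟨T, hT, hTpos⟩ : ∃ T ∈ M.powersetCard j, 0 < T.fold min 1 f := by
    by_contra! hle
    exact h.not_ge ((fold_max_le 0).mpr ⟨le_rfl, hle⟩)
  obtain ⟨hTM, hTcard⟩ := mem_powersetCard.mp hT
  refine hTcard ▸ card_le_card fun v hv => mem_supportIn.mpr ⟨hTM hv, ?_⟩
  exact (hTpos.trans_le ((fold_min_le _).mpr (Or.inr ⟨v, hv, le_rfl⟩))).ne'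

theorem exists_le_kthMax (hf : ∀ v, f v ≤ 1) (h : #(supportIn M f) = j) (hj : j ≠ 0) :
    ∃ v ∈ supportIn M f, f v ≤ kthMax M j f := by
  by_contra! hlt
  obtain ⟨v, hv⟩ : (supportIn M f).Nonempty := card_pos.mp (by omega)
  have hle : (supportIn M f).fold min 1 f ≤ kthMax M j f :=
    (le_fold_max _).mpr (Or.inr ⟨_, mem_powersetCard.mpr ⟨filter_subset _ _, h⟩, le_rfl⟩)
  exact hle.not_gt ((lt_fold_min _).mpr ⟨(hlt v hv).trans_le (hf v), hlt⟩)

theorem transfer_nonneg (hf : ∀ v, 0 ≤ f v) : 0 ≤ transfer M j f :=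
  sum_nonneg fun v _ => le_min (hf v) kthMax_nonneg

theorem transfer_eq_zero (hf : ∀ v, 0 ≤ f v) (h : kthMax M j f = 0) : transfer M j f = 0 :=
  sum_eq_zero fun v _ => by rw [h, min_eq_right (hf v)]

theorem continuous_fold_min (T : Finset V) : Continuous fun f : V → ℝ => T.fold min 1 f := by
  induction T using Finset.cons_induction with
  | empty => exact continuous_const
  | cons a T _ ih => simpa only [fold_cons] using (continuous_apply a).min ih

theorem continuous_kthMax : Continuous (kthMax M j) := by
  unfold kthMax
  induction M.powersetCard j using Finset.cons_induction with
  | empty => exact continuous_const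
  | cons T S _ ih => simpa only [fold_cons] using (continuous_fold_min T).max ih

theorem continuous_transfer : Continuous (transfer M j) :=
  continuous_finsetSum _ fun v _ => (continuous_apply v).min continuous_kthMax

end

variable [DecidableEq V]

def meetAtMost (K : AbsSC V) (M : Finset V) (j : ℕ) : AbsSC V where
  faces := {σ | σ ∈ K.faces ∧ #(σ ∩ M) ≤ j}
  not_empty_mem h := K.not_empty_mem h.1
  down_closed s hs t hts htne :=
    ⟨K.down_closed s hs.1 t hts htne, (card_le_card (inter_subset_inter_right hts)).trans hs.2⟩

theorem meetAtMost_faces_subset_succ (K : AbsSC V) (M : Finset V) (j : ℕ) :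
    (K.meetAtMost M j).faces ⊆ (K.meetAtMost M (j + 1)).faces :=
  fun _ h => ⟨h.1, h.2.trans j.le_succ⟩

theorem meetAtMost_card (K : AbsSC V) (M : Finset V) : K.meetAtMost M #M = K :=
  ext_faces <| Set.ext fun _ => ⟨And.left, fun h => ⟨h, card_le_card inter_subset_right⟩⟩

def IsApexMap (K : AbsSC V) (M : Finset V) (u : Finset V → V) : Prop :=
  ∀ σ ∈ K.faces, (σ ∩ M).Nonempty → u (σ ∩ M) ∉ M ∧ insert (u (σ ∩ M)) σ ∈ K.faces

noncomputable def pushToApex (M : Finset V) (j : ℕ) (u : Finset V → V) (f : V → ℝ) : V → ℝ :=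
  fun v => if v ∈ M then f v - min (f v) (kthMax M j f)
    else if v = u (supportIn M f) then f v + transfer M j f else f v

section

variable {M : Finset V} {j : ℕ} {f : V → ℝ} (u : Finset V → V)

theorem pushToApex_eq_self (hf : ∀ v, 0 ≤ f v) (h : kthMax M j f = 0) :
    pushToApex M j u f = f := by
  funext v
  simp only [pushToApex, h, min_eq_right (hf v), sub_zero, transfer_eq_zero hf h, add_zero,
    ite_self]

theorem pushToApex_nonneg (hf : ∀ v, 0 ≤ f v) (v : V) : 0 ≤ pushToApex M j u f v := by
  unfold pushToApex
  split_ifs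
  · exact sub_nonneg.mpr (min_le_left _ _)
  · exact add_nonneg (hf v) (transfer_nonneg hf)
  · exact hf v

theorem pushToApex_eq_zero {v : V} (hv : v ≠ u (supportIn M f)) (hfv : f v = 0) :
    pushToApex M j u f v = 0 := by
  unfold pushToApex
  split_ifs
  · rw [hfv, min_eq_left kthMax_nonneg, sub_zero]
  · exact hfv

theorem sum_pushToApex {τ : Finset V} (hu : u (supportIn M f) ∈ τ)
    (huM : u (supportIn M f) ∉ M) (hτ : supportIn M f ⊆ τ) :
    ∑ v ∈ τ, pushToApex M j u f v = ∑ v ∈ τ, f v := by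
  have hpoint : ∀ v, pushToApex M j u f v = f v + (if v = u (supportIn M f) then transfer M j f
      else 0) - (if v ∈ M then min (f v) (kthMax M j f) else 0) := by
    intro v
    unfold pushToApex
    by_cases hvM : v ∈ M
    · rw [if_pos hvM, if_pos hvM, if_neg (ne_of_mem_of_not_mem hvM huM)]
      ring
    · simp only [if_neg hvM]
      split_ifs <;> ring
  have hremoved : ∑ v ∈ τ with v ∈ M, min (f v) (kthMax M j f) = transfer M j f := by
    refine sum_subset (fun v hv => (mem_filter.mp hv).2) fun v hvM hv => ?_
    have hfv : f v = 0 := not_not.mp fun h =>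
      hv (mem_filter.mpr ⟨hτ (mem_supportIn.mpr ⟨hvM, h⟩), hvM⟩)
    rw [hfv, min_eq_left kthMax_nonneg]
  rw [sum_congr rfl fun v _ => hpoint v, sum_sub_distrib, sum_add_distrib, sum_ite_eq' τ,
    if_pos hu, ← sum_filter, hremoved, add_sub_cancel_right]

end

open Filter Topology

variable {K : AbsSC V} {M : Finset V} {u : Finset V → V} {j : ℕ}

theorem supportIn_eq_inter (f : V → ℝ) {σ : Finset V} (hσ : ∀ v, f v ≠ 0 ↔ v ∈ σ) :
    supportIn M f = σ ∩ M := by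
  ext v
  rw [mem_supportIn, mem_inter, hσ, and_comm]

theorem card_supportIn_le (f : (K.meetAtMost M j).space) : #(supportIn M f.1) ≤ j := by
  obtain ⟨σ, hσ, hsupp, -⟩ := exists_face_support _ f
  rw [supportIn_eq_inter f.1 hsupp]
  exact hσ.2

theorem card_supportIn_eq (f : (K.meetAtMost M (j + 1)).space) (h : kthMax M (j + 1) f.1 ≠ 0) :
    #(supportIn M f.1) = j + 1 :=
  le_antisymm (card_supportIn_le f) (le_card_supportIn (kthMax_nonneg.lt_of_ne' h))

/-- The face is the support of `f` coned off by the apex of its trace on `M`. -/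
theorem exists_face_pushToApex (hu : K.IsApexMap M u) (f : (K.meetAtMost M (j + 1)).space)
    (h : kthMax M (j + 1) f.1 ≠ 0) :
    ∃ τ ∈ (K.meetAtMost M (j + 1)).faces, τ ∩ M = supportIn M f.1 ∧
      (∀ v, f.1 v ≠ 0 → v ∈ τ) ∧ (∀ v, pushToApex M (j + 1) u f.1 v ≠ 0 → v ∈ τ) ∧
      ∑ v ∈ τ, pushToApex M (j + 1) u f.1 v = 1 := by
  obtain ⟨σ, hσ, hsupp, -⟩ := exists_face_support _ f
  have hσM := supportIn_eq_inter (M := M) f.1 hsupp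
  have hne : (σ ∩ M).Nonempty := by
    rw [← hσM, ← card_pos, card_supportIn_eq f h]
    exact j.succ_pos
  obtain ⟨huM, hins⟩ := hu σ hσ.1 hne
  rw [← hσM] at huM hins
  have hτM : insert (u (supportIn M f.1)) σ ∩ M = supportIn M f.1 := by
    rw [insert_inter_of_notMem huM, hσM]
  have hfτ : ∀ v, f.1 v ≠ 0 → v ∈ insert (u (supportIn M f.1)) σ :=
    fun v hv => mem_insert_of_mem ((hsupp v).mp hv)
  refine ⟨insert (u (supportIn M f.1)) σ, ⟨hins, by rw [hτM]; exact card_supportIn_le f⟩, hτM,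
    hfτ, fun v hv => ?_, ?_⟩
  · by_contra hvτ
    exact hv (pushToApex_eq_zero u (fun h => hvτ (h ▸ mem_insert_self _ _))
      (not_not.mp fun h => hvτ (hfτ v h)))
  · rw [sum_pushToApex u (mem_insert_self _ _) huM (hτM.ge.trans inter_subset_left),
      sum_eq_one_of_support_subset f hfτ]

theorem isPoint_pushToApex (hu : K.IsApexMap M u) (f : (K.meetAtMost M (j + 1)).space) :
    (K.meetAtMost M j).IsPoint (pushToApex M (j + 1) u f.1) := by
  refine ⟨pushToApex_nonneg u f.2.1, ?_⟩
  by_cases h : kthMax M (j + 1) f.1 = 0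
  · obtain ⟨σ, hσ, hsupp, hsum⟩ := exists_face_support _ f
    rw [pushToApex_eq_self u f.2.1 h]
    have hcard : #(supportIn M f.1) ≠ j + 1 := fun hc => (kthMax_pos f.2.1 hc).ne' h
    have hle := card_supportIn_le f
    rw [supportIn_eq_inter f.1 hsupp] at hcard hle
    exact ⟨σ, ⟨hσ.1, by omega⟩, fun v hv => (hsupp v).mp hv, hsum⟩
  obtain ⟨τ, hτ, hτM, -, hgτ, hsum⟩ := exists_face_pushToApex hu f h
  set g := pushToApex M (j + 1) u f.1
  have hcard := card_supportIn_eq f h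
  -- the weight at which the cut is made is attained, so that vertex of `M` drops out
  obtain ⟨B, hB, hBle⟩ := exists_le_kthMax (apply_le_one f) hcard j.succ_ne_zero
  have hgB : g B = 0 := by
    simp only [g, pushToApex, if_pos (mem_supportIn.mp hB).1, min_eq_left hBle, sub_self]
  have hsum' : ∑ v ∈ τ with g v ≠ 0, g v = 1 := by rwa [sum_filter_ne_zero]
  refine ⟨{v ∈ τ | g v ≠ 0}, ⟨K.down_closed τ hτ.1 _ (filter_subset _ _) ?_, ?_⟩,
    fun v hv => mem_filter.mpr ⟨hgτ v hv, hv⟩, hsum'⟩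
  · exact nonempty_iff_ne_empty.mp (nonempty_of_sum_ne_zero (by rw [hsum']; exact one_ne_zero))
  · calc #({v ∈ τ | g v ≠ 0} ∩ M) ≤ #((supportIn M f.1).erase B) := by
          refine card_le_card fun v hv => ?_
          obtain ⟨hvτ, hvM⟩ := mem_inter.mp hv
          obtain ⟨hvτ, hgv⟩ := mem_filter.mp hvτ
          exact mem_erase.mpr ⟨fun hvB => hgv (hvB ▸ hgB), hτM ▸ mem_inter.mpr ⟨hvτ, hvM⟩⟩
      _ = j := by rw [card_erase_of_mem hB, hcard, Nat.add_sub_cancel]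

theorem isPoint_segment (hu : K.IsApexMap M u) (f : (K.meetAtMost M (j + 1)).space) {t : ℝ}
    (ht₀ : 0 ≤ t) (ht₁ : t ≤ 1) :
    (K.meetAtMost M (j + 1)).IsPoint
      fun v => (1 - t) * f.1 v + t * pushToApex M (j + 1) u f.1 v := by
  by_cases h : kthMax M (j + 1) f.1 = 0
  · simp only [pushToApex_eq_self u f.2.1 h, ← add_mul, sub_add_cancel, one_mul]
    exact f.2
  obtain ⟨τ, hτ, -, hfτ, hgτ, hsum⟩ := exists_face_pushToApex hu f h
  refine ⟨fun v => add_nonneg (mul_nonneg (by linarith) (f.2.1 v))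
    (mul_nonneg ht₀ (pushToApex_nonneg u f.2.1 v)), τ, hτ, fun v hv => ?_, ?_⟩
  · by_contra hvτ
    have hfv : f.1 v = 0 := not_not.mp fun h => hvτ (hfτ v h)
    have hgv : pushToApex M (j + 1) u f.1 v = 0 := not_not.mp fun h => hvτ (hgτ v h)
    exact hv (by simp only [hfv, hgv, mul_zero, add_zero])
  · rw [sum_add_distrib, ← mul_sum, ← mul_sum, hsum, sum_eq_one_of_support_subset f hfτ]
    ring

theorem eventually_supportIn_eq (f₀ : (K.meetAtMost M j).space) (h : #(supportIn M f₀.1) = j) :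
    ∀ᶠ f in 𝓝 f₀, supportIn M f.1 = supportIn M f₀.1 := by
  have hpos : ∀ᶠ f in 𝓝 f₀, ∀ v ∈ supportIn M f₀.1, f.1 v ≠ 0 :=
    (eventually_all_finset _).mpr fun v hv =>
      ((continuous_apply v).comp continuous_subtype_val).continuousAt.eventually_ne
        (mem_supportIn.mp hv).2
  filter_upwards [hpos] with f hf
  refine (eq_of_subset_of_card_le (fun v hv => ?_) (by rw [h]; exact card_supportIn_le f)).symm
  exact mem_supportIn.mpr ⟨(mem_supportIn.mp hv).1, hf v hv⟩

theorem continuous_pushToApex :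
    Continuous fun f : (K.meetAtMost M (j + 1)).space => pushToApex M (j + 1) u f.1 := by
  have hval : Continuous fun f : (K.meetAtMost M (j + 1)).space => f.1 := continuous_subtype_val
  refine continuous_pi fun v => ?_
  have hv : Continuous fun f : (K.meetAtMost M (j + 1)).space => f.1 v :=
    (continuous_apply v).comp hval
  by_cases hvM : v ∈ M
  · simp only [pushToApex, if_pos hvM]
    exact hv.sub (hv.min (continuous_kthMax.comp hval))
  have hsplit : (fun f : (K.meetAtMost M (j + 1)).space => pushToApex M (j + 1) u f.1 v) =
      fun f => f.1 v + if v = u (supportIn M f.1) then transfer M (j + 1) f.1 else 0 := by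
    funext f
    simp only [pushToApex, if_neg hvM]
    split_ifs <;> simp
  rw [hsplit]
  refine hv.add (continuous_ite_zero_of_eventually_iff (continuous_transfer.comp hval)
    (fun f => transfer_nonneg f.2.1) fun f₀ hf₀ => ?_)
  -- where mass is transferred, the support in `M` is full and hence locally constant
  have h : kthMax M (j + 1) f₀.1 ≠ 0 := fun h => hf₀ (transfer_eq_zero f₀.2.1 h)
  filter_upwards [eventually_supportIn_eq f₀ (card_supportIn_eq f₀ h)] with f hf
  rw [hf]

variable (u) in
noncomputable def meetAtMostRetraction (hu : K.IsApexMap M u) (j : ℕ) :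
    C((K.meetAtMost M (j + 1)).space, (K.meetAtMost M j).space) :=
  ⟨fun f => ⟨pushToApex M (j + 1) u f.1, isPoint_pushToApex hu f⟩,
    continuous_pushToApex.subtype_mk _⟩

noncomputable def meetAtMostRetractionHomotopy (hu : K.IsApexMap M u) (j : ℕ) :
    ContinuousMap.Homotopy (ContinuousMap.id _)
      ((incl (K.meetAtMost_faces_subset_succ M j)).comp (meetAtMostRetraction u hu j)) where
  toFun p := ⟨fun v => (1 - p.1) * p.2.1 v + p.1 * pushToApex M (j + 1) u p.2.1 v,
    isPoint_segment hu p.2 p.1.2.1 p.1.2.2⟩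
  continuous_toFun := by
    refine Continuous.subtype_mk (continuous_pi fun v => ?_) _
    have ht : Continuous fun p : unitInterval × (K.meetAtMost M (j + 1)).space => (p.1 : ℝ) :=
      continuous_subtype_val.comp continuous_fst
    exact ((continuous_const.sub ht).mul
      ((continuous_apply v).comp (continuous_subtype_val.comp continuous_snd))).add
      (ht.mul ((continuous_apply v).comp (continuous_pushToApex.comp continuous_snd)))
  map_zero_left f := Subtype.ext <| funext fun v => by simp
  map_one_left f := Subtype.ext <| funext fun v => by
    simp only [Set.Icc.coe_one, sub_self, zero_mul, zero_add, one_mul]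
    rfl

noncomputable def meetAtMostSuccHomotopyEquiv (hu : K.IsApexMap M u) (j : ℕ) :
    ContinuousMap.HomotopyEquiv (K.meetAtMost M (j + 1)).space (K.meetAtMost M j).space where
  toFun := meetAtMostRetraction u hu j
  invFun := incl (K.meetAtMost_faces_subset_succ M j)
  left_inv := ⟨(meetAtMostRetractionHomotopy hu j).symm⟩
  right_inv := by
    have hid : (meetAtMostRetraction u hu j).comp (incl (K.meetAtMost_faces_subset_succ M j)) =
        ContinuousMap.id _ := ContinuousMap.ext fun f => Subtype.ext <|
      pushToApex_eq_self u f.2.1 (kthMax_eq_zero (Nat.lt_succ_of_le (card_supportIn_le f)))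
    rw [hid]

theorem hEquiv_meetAtMost_zero (hu : K.IsApexMap M u) : K.HEquiv (K.meetAtMost M 0) := by
  have hstep : ∀ j, (K.meetAtMost M j).HEquiv (K.meetAtMost M 0) := by
    intro j
    induction j with
    | zero => exact ⟨ContinuousMap.HomotopyEquiv.refl _⟩
    | succ j ih => exact ⟨(meetAtMostSuccHomotopyEquiv hu j).trans ih.some⟩
  simpa only [meetAtMost_card] using hstep #M

end AbsSC

theorem VRc.insert_mem_faces {F : Set (Finset ℕ)} {r : ℕ} {σ : Finset (Finset ℕ)} {A : Finset ℕ}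
    (hσ : σ ∈ (VRc F r).faces) (hA : A ∈ F) (hd : ∀ X ∈ σ, #(symmDiff A X) ≤ r) :
    insert A σ ∈ (VRc F r).faces := by
  obtain ⟨-, hF, hσd⟩ := hσ
  refine ⟨insert_nonempty A σ, fun X hX => (mem_insert.mp hX).elim (· ▸ hA) (hF X), ?_⟩
  intro X hX Y hY
  rw [mem_insert] at hX hY
  rcases hX with rfl | hX <;> rcases hY with rfl | hY
  · simp
  · exact hd Y hY
  · rw [symmDiff_comm]
    exact hd X hX
  · exact hσd X hX Y hY

theorem VRc.meetAtMost_zero (F : Set (Finset ℕ)) (r : ℕ) (M : Finset (Finset ℕ)) :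
    (VRc F r).meetAtMost M 0 = VRc (F \ M) r := by
  refine AbsSC.ext_faces (Set.ext fun σ => ?_)
  simp only [VRc, AbsSC.meetAtMost, Set.mem_ofPred_eq, nonpos_iff_eq_zero, card_eq_zero,
    ← disjoint_iff_inter_eq_empty, disjoint_left, Set.mem_sdiff, mem_coe]
  grind

def middleLayer (m n : ℕ) : Finset (Finset ℕ) := (Icc 1 m).powersetCard (n + 1)

theorem mem_middleLayer {m n : ℕ} {A : Finset ℕ} : A ∈ middleLayer m n ↔ A ∈ Fnm m (n + 1) :=
  mem_powersetCard

theorem layers_diff_middleLayer (m n : ℕ) :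
    (Fnm m n ∪ Fnm m (n + 1) ∪ Fnm m (n + 2)) \ ↑(middleLayer m n) = Fnm m n ∪ Fnm m (n + 2) := by
  ext A
  simp only [Set.mem_sdiff, Set.mem_union, mem_coe, mem_middleLayer, Fnm, Set.mem_ofPred_eq]
  grind

def IsLayerApex (m n : ℕ) (P : Finset (Finset ℕ)) (A : Finset ℕ) : Prop :=
  (A ∈ Fnm m n ∧ ∀ B ∈ P, A ⊆ B) ∨ (A ∈ Fnm m (n + 2) ∧ ∀ B ∈ P, B ⊆ A)

/-- Which apex is chosen is irrelevant; what matters is that it depends on `P` alone. -/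
noncomputable def layerApex (m n : ℕ) (P : Finset (Finset ℕ)) : Finset ℕ :=
  Classical.epsilon (IsLayerApex m n P)

theorem exists_isLayerApex {m n : ℕ} {P : Finset (Finset ℕ)} (hP : P.Nonempty)
    (hPF : ∀ B ∈ P, B ∈ Fnm m (n + 1)) (hd : ∀ B ∈ P, ∀ B' ∈ P, #(symmDiff B B') ≤ 2) :
    ∃ A, IsLayerApex m n P A := by
  have hadj : ∀ B ∈ P, ∀ B' ∈ P, #(B \ B') ≤ 1 := fun B hB B' hB' =>
    card_sdiff_le_one_of_card_symmDiff_le_two ((hPF B hB).2.trans (hPF B' hB').2.symm)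
      (hd B hB B' hB')
  obtain ⟨C, hC, hCP⟩ | ⟨D, hDS, hD, hPD⟩ := exists_common_subset_or_superset hP hPF hadj
  · obtain ⟨B, hB⟩ := hP
    exact ⟨C, Or.inl ⟨⟨(hCP B hB).trans (hPF B hB).1, hC⟩, hCP⟩⟩
  · exact ⟨D, Or.inr ⟨⟨hDS, hD⟩, hPD⟩⟩

theorem IsLayerApex.card_symmDiff_le {m n : ℕ} {σ : Finset (Finset ℕ)} {A X : Finset ℕ}
    (hσ : σ ∈ (VRc (Fnm m n ∪ Fnm m (n + 1) ∪ Fnm m (n + 2)) 2).faces)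
    (hP : (σ ∩ middleLayer m n).Nonempty) (hA : IsLayerApex m n (σ ∩ middleLayer m n) A)
    (hX : X ∈ σ) : #(symmDiff A X) ≤ 2 := by
  obtain ⟨-, hF, hd⟩ := hσ
  obtain ⟨B, hB⟩ := hP
  obtain ⟨hBσ, hBc⟩ := (mem_inter.mp hB).imp_right fun h => (mem_middleLayer.mp h).2
  have hXB : #X = n → X ⊆ B := fun hXc =>
    subset_of_card_symmDiff_le_two (hd X hX B hBσ) (by omega)
  have hBX : #X = n + 2 → B ⊆ X := fun hXc =>
    subset_of_card_symmDiff_le_two (hd B hBσ X hX) (by omega)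
  have hXP : X ⊆ Icc 1 m → #X = n + 1 → X ∈ σ ∩ middleLayer m n := fun hXS hXc =>
    mem_inter.mpr ⟨hX, mem_middleLayer.mpr ⟨hXS, hXc⟩⟩
  rcases hF X hX with (⟨-, hXc⟩ | ⟨hXS, hXc⟩) | ⟨-, hXc⟩ <;>
    rcases hA with ⟨⟨-, hAc⟩, hAP⟩ | ⟨⟨-, hAc⟩, hAP⟩
  · have := card_symmDiff_le_of_subset (hAP B hB) (hXB hXc)
    omega
  · rw [symmDiff_comm, card_symmDiff_of_subset ((hXB hXc).trans (hAP B hB))]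
    omega
  · rw [card_symmDiff_of_subset (hAP X (hXP hXS hXc))]
    omega
  · rw [symmDiff_comm, card_symmDiff_of_subset (hAP X (hXP hXS hXc))]
    omega
  · rw [card_symmDiff_of_subset ((hAP B hB).trans (hBX hXc))]
    omega
  · have := card_symmDiff_le_of_superset (hAP B hB) (hBX hXc)
    omega

theorem isApexMap_layerApex (m n : ℕ) :
    (VRc (Fnm m n ∪ Fnm m (n + 1) ∪ Fnm m (n + 2)) 2).IsApexMap (middleLayer m n)
      (layerApex m n) := by
  intro σ hσ hP
  have hA : IsLayerApex m n (σ ∩ middleLayer m n) (layerApex m n (σ ∩ middleLayer m n)) :=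
    Classical.epsilon_spec (exists_isLayerApex hP
      (fun B hB => mem_middleLayer.mp (mem_inter.mp hB).2)
      fun B hB B' hB' => hσ.2.2 B (mem_inter.mp hB).1 B' (mem_inter.mp hB').1)
  refine ⟨fun hmem => ?_, VRc.insert_mem_faces hσ ?_ fun X hX => hA.card_symmDiff_le hσ hP hX⟩
  · have := (mem_middleLayer.mp hmem).2
    rcases hA with ⟨⟨-, h⟩, -⟩ | ⟨⟨-, h⟩, -⟩ <;> omega
  · rcases hA with ⟨h, -⟩ | ⟨h, -⟩
    exacts [Or.inl (Or.inl h), Or.inr h]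

theorem stmt19_general (m n : ℕ) :
    AbsSC.HEquiv (VRc (Fnm m n ∪ Fnm m (n + 1) ∪ Fnm m (n + 2)) 2)
      (VRc (Fnm m n ∪ Fnm m (n + 2)) 2) := by
  have h := AbsSC.hEquiv_meetAtMost_zero (isApexMap_layerApex m n)
  rwa [VRc.meetAtMost_zero, layers_diff_middleLayer] at h

/-- For `1 ≤ n < m - 3` with `m ≥ 4`,
`VR(F_n^m ∪ F_{n+1}^m ∪ F_{n+2}^m, 2) ≃ VR(F_n^m ∪ F_{n+2}^m, 2)`. -/
theorem stmt19 (m n : ℕ) (hn : 1 ≤ n) (h : n + 3 < m) (hm : 4 ≤ m) :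
    AbsSC.HEquiv (VRc (Fnm m n ∪ Fnm m (n + 1) ∪ Fnm m (n + 2)) 2)
      (VRc (Fnm m n ∪ Fnm m (n + 2)) 2) :=
  stmt19_general m n
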